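/- arXiv:math/0512579 — 3 statements merged into one kernel-verified Lean document; each statement's English description precedes it below -/
import Mathlib

section
/- A tempered distribution f on ℝⁿ has quasi-asymptotics g of degree α at infinity with respect to an automodel function ρ(t) if and only if its Fourier transform F[f] has quasi-asymptotics F[g] of degree −α−n at zero with respect to the automodel function tⁿρ(t). Precisely: f(tx)/ρ(t) → g(x) in S'(ℝⁿ) as t → ∞ if and only if F[f](ξ/t)/(tⁿρ(t)) → F[g](ξ) in S'(ℝⁿ) as t → ∞. -/
open MeasureTheory SchwartzMap Filter Topology

noncomputable section

/-- Multiplication by a nonzero scalar `t` as a continuous linear equivalence. -/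
def dilEquiv {E : Type*} [NormedAddCommGroup E] [NormedSpace ℝ E] (t : ℝ) (ht : t ≠ 0) :
    E ≃L[ℝ] E :=
  { LinearEquiv.smulOfNeZero ℝ E t ht with
    continuous_toFun := continuous_const_smul t
    continuous_invFun := continuous_const_smul t⁻¹ }

/-- Dilation `φ ↦ φ (t • ·)` on Schwartz space, `t ≠ 0`. -/
def dil {E : Type*} [NormedAddCommGroup E] [NormedSpace ℝ E] (t : ℝ) (ht : t ≠ 0) :
    𝓢(E, ℂ) →L[ℝ] 𝓢(E, ℂ) :=
  SchwartzMap.compCLMOfContinuousLinearEquiv ℝ (dilEquiv t ht)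

/-- The pairing `⟨f(t·), φ⟩ = t^{-n} ⟨f, φ(·/t)⟩` of the scaled tempered
distribution `x ↦ f(t x)` with a test function (junk value `0` for `t = 0`). -/
def pairScaled (n : ℕ) (f : 𝓢(EuclideanSpace ℝ (Fin n), ℂ) →L[ℂ] ℂ) (t : ℝ)
    (φ : 𝓢(EuclideanSpace ℝ (Fin n), ℂ)) : ℂ :=
  if ht : t ≠ 0 then ((t ^ (-(n : ℤ)) : ℝ) : ℂ) * f (dil t⁻¹ (inv_ne_zero ht) φ) else 0

/-- The pairing `⟨F[f](·/t), φ⟩ = tⁿ ⟨F[f], φ(t·)⟩ = tⁿ ⟨f, F[φ(t·)]⟩` of the scaled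
Fourier transform `ξ ↦ F[f](ξ/t)` with a test function (junk value `0` for `t = 0`). -/
def pairFourierScaled (n : ℕ) (f : 𝓢(EuclideanSpace ℝ (Fin n), ℂ) →L[ℂ] ℂ) (t : ℝ)
    (φ : 𝓢(EuclideanSpace ℝ (Fin n), ℂ)) : ℂ :=
  if ht : t ≠ 0 then ((t ^ (n : ℤ) : ℝ) : ℂ) * f (fourierTransformCLM ℂ (dil t ht φ)) else 0

/-!
The Fourier transform intertwines dilations: `F[φ(t·)] = t⁻ⁿ F[φ](·/t)` for `t > 0`. Hence
`⟨F[f](·/t), φ⟩ = tⁿ ⟨f(t·), F[φ]⟩`, so after dividing by `tⁿ ρ(t)` the two families of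
pairings agree on test functions related by `F`, which is a bijection of Schwartz space.
-/

open FourierTransform RealInnerProductSpace Module

section Dilation

variable {V : Type*} [NormedAddCommGroup V] [InnerProductSpace ℝ V] [FiniteDimensional ℝ V]
  [MeasurableSpace V] [BorelSpace V]

theorem fourierTransformCLM_dil (t : ℝ) (ht : t ≠ 0) (φ : 𝓢(V, ℂ)) :
    fourierTransformCLM ℂ (dil t ht φ) =
      |(t ^ finrank ℝ V)⁻¹| • dil t⁻¹ (inv_ne_zero ht) (fourierTransformCLM ℂ φ) := by
  ext ξ
  change 𝓕 (fun x => φ (t • x)) ξ = |(t ^ finrank ℝ V)⁻¹| • 𝓕 (⇑φ) (t⁻¹ • ξ)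
  have hinner (x : V) : ⟪x, ξ⟫ = ⟪t • x, t⁻¹ • ξ⟫ := by
    rw [real_inner_smul_left, real_inner_smul_right, ← mul_assoc, mul_inv_cancel₀ ht, one_mul]
  simp only [Real.fourier_eq, hinner]
  exact Measure.integral_comp_smul volume (fun u => 𝐞 (-⟪u, t⁻¹ • ξ⟫) • φ u) t

end Dilation

theorem pairFourierScaled_eq_mul_pairScaled_fourier {n : ℕ}
    (f : 𝓢(EuclideanSpace ℝ (Fin n), ℂ) →L[ℂ] ℂ)
    {t : ℝ} (ht : 0 < t) (φ : 𝓢(EuclideanSpace ℝ (Fin n), ℂ)) :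
    pairFourierScaled n f t φ = ((t ^ n : ℝ) : ℂ) * pairScaled n f t (fourierTransformCLM ℂ φ) := by
  rw [pairFourierScaled, pairScaled, dif_pos ht.ne', dif_pos ht.ne', fourierTransformCLM_dil,
    f.map_smul_of_tower, finrank_euclideanSpace_fin, abs_of_pos (by positivity)]
  push_cast [zpow_natCast, zpow_neg, Complex.real_smul]
  field_simp

theorem quasiasymptotics_infinity_iff_fourier_zero_general (n : ℕ)
    (f g : 𝓢(EuclideanSpace ℝ (Fin n), ℂ) →L[ℂ] ℂ) (ρ : ℝ → ℝ) :
    (∀ φ, Tendsto (fun t : ℝ => pairScaled n f t φ / ((ρ t : ℝ) : ℂ)) atTop (𝓝 (g φ))) ↔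
    (∀ φ, Tendsto (fun t : ℝ => pairFourierScaled n f t φ / (((t ^ (n : ℕ) * ρ t : ℝ)) : ℂ))
        atTop (𝓝 (g (fourierTransformCLM ℂ φ)))) := by
  have hquot (φ) : (fun t : ℝ => pairScaled n f t (fourierTransformCLM ℂ φ) / ((ρ t : ℝ) : ℂ))
      =ᶠ[atTop] fun t => pairFourierScaled n f t φ / (((t ^ n * ρ t : ℝ)) : ℂ) := by
    filter_upwards [eventually_gt_atTop 0] with t ht
    have htn : ((t ^ n : ℝ) : ℂ) ≠ 0 := by exact_mod_cast (pow_pos ht n).ne'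
    rw [pairFourierScaled_eq_mul_pairScaled_fourier f ht, Complex.ofReal_mul,
      mul_div_mul_left _ _ htn]
  rw [(fourierCLE ℂ 𝓢(EuclideanSpace ℝ (Fin n), ℂ)).toEquiv.forall_congr_right.symm]
  exact forall_congr' fun φ => tendsto_congr' (hquot φ)

/-- Tauberian theorem (Theorem 5): a tempered distribution `f` on `ℝⁿ` has
quasi-asymptotics `g` at infinity with respect to an automodel function `ρ` of degree `α`
iff its Fourier transform has quasi-asymptotics `F[g]` at zero with respect to `tⁿ ρ(t)`. -/
theorem quasiasymptotics_infinity_iff_fourier_zero (n : ℕ)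
    (f g : 𝓢(EuclideanSpace ℝ (Fin n), ℂ) →L[ℂ] ℂ) (ρ : ℝ → ℝ) (α : ℝ)
    (hρpos : ∀ t : ℝ, 0 < t → 0 < ρ t)
    (hρcont : ContinuousOn ρ (Set.Ioi (0 : ℝ)))
    (hauto : ∀ a : ℝ, 0 < a → Tendsto (fun t => ρ (t * a) / ρ t) atTop (𝓝 (a ^ α))) :
    (∀ φ, Tendsto (fun t : ℝ => pairScaled n f t φ / ((ρ t : ℝ) : ℂ)) atTop (𝓝 (g φ))) ↔
    (∀ φ, Tendsto (fun t : ℝ => pairFourierScaled n f t φ / (((t ^ (n : ℕ) * ρ t : ℝ)) : ℂ))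
        atTop (𝓝 (g (fourierTransformCLM ℂ φ)))) :=
  quasiasymptotics_infinity_iff_fourier_zero_general n f g ρ

end
end

section
/- If a tempered distribution f on ℝⁿ has quasi-asymptotics g ≢ 0 at infinity with respect to an automodel function ρ of degree α, then g is a homogeneous distribution of degree α; that is, ⟨g, φ(·/t)⟩ = t^{α+n} ⟨g, φ⟩ for all Schwartz φ and all t > 0. -/
open MeasureTheory SchwartzMap Filter Topology

noncomputable section

/- Writing `ψ = φ(·/t)`, the dilation identity `⟨f(s·), ψ⟩ = tⁿ ⟨f(st·), φ⟩` turns the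
quasi-asymptotic limit of `f` at `ψ` into that at `φ` along `s ↦ st`, and the automodel
property contributes the factor `ρ(st)/ρ(s) → t^α`. Uniqueness of limits gives
`⟨g, ψ⟩ = tⁿ t^α ⟨g, φ⟩`. -/

lemma dil_congr {E : Type*} [NormedAddCommGroup E] [NormedSpace ℝ E] {s t : ℝ}
    (hs : s ≠ 0) (ht : t ≠ 0) (h : s = t) : dil s hs = (dil t ht : 𝓢(E, ℂ) →L[ℝ] 𝓢(E, ℂ)) := by
  subst h; rfl

lemma dil_dil {E : Type*} [NormedAddCommGroup E] [NormedSpace ℝ E] {s t : ℝ}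
    (hs : s ≠ 0) (ht : t ≠ 0) (φ : 𝓢(E, ℂ)) :
    dil s hs (dil t ht φ) = dil (t * s) (mul_ne_zero ht hs) φ := by
  ext x
  exact congrArg φ (smul_smul t s x)

lemma pairScaled_dil_inv (n : ℕ) (f : 𝓢(EuclideanSpace ℝ (Fin n), ℂ) →L[ℂ] ℂ) {s t : ℝ}
    (hs : s ≠ 0) (ht : t ≠ 0) (φ : 𝓢(EuclideanSpace ℝ (Fin n), ℂ)) :
    pairScaled n f s (dil t⁻¹ (inv_ne_zero ht) φ) =
      ((t ^ n : ℝ) : ℂ) * pairScaled n f (s * t) φ := by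
  have hst : s * t ≠ 0 := mul_ne_zero hs ht
  have hdil : dil s⁻¹ (inv_ne_zero hs) (dil t⁻¹ (inv_ne_zero ht) φ) =
      dil (s * t)⁻¹ (inv_ne_zero hst) φ := by
    rw [dil_dil, dil_congr _ _ (mul_inv_rev s t).symm]
  have hpow : s ^ (-(n : ℤ)) = t ^ n * (s * t) ^ (-(n : ℤ)) := by
    simp only [zpow_neg, zpow_natCast, mul_pow]
    field_simp
  rw [pairScaled, pairScaled, dif_pos hs, dif_pos hst, hdil, hpow]
  push_cast
  ring

lemma tendsto_comp_div_of_tendsto_ratio {X 𝕜 : Type*} [NormedField 𝕜] {l : Filter X}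
    {e : X → X} {F ρ : X → 𝕜} {L c : 𝕜} (he : Tendsto e l l) (hρ : ∀ᶠ x in l, ρ x ≠ 0)
    (hF : Tendsto (fun x => F x / ρ x) l (𝓝 L))
    (hratio : Tendsto (fun x => ρ (e x) / ρ x) l (𝓝 c)) :
    Tendsto (fun x => F (e x) / ρ x) l (𝓝 (L * c)) := by
  refine ((hF.comp he).mul hratio).congr' ?_
  filter_upwards [he.eventually hρ] with x hx
  simp only [Function.comp_apply]
  field_simp

theorem quasiasymptotic_limit_homogeneous_general (n : ℕ)
    (f g : 𝓢(EuclideanSpace ℝ (Fin n), ℂ) →L[ℂ] ℂ) (ρ : ℝ → ℝ) (α : ℝ)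
    (hρpos : ∀ t : ℝ, 0 < t → 0 < ρ t)
    (hauto : ∀ a : ℝ, 0 < a → Tendsto (fun t => ρ (t * a) / ρ t) atTop (𝓝 (a ^ α)))
    (hqa : ∀ φ, Tendsto (fun t : ℝ => pairScaled n f t φ / ((ρ t : ℝ) : ℂ)) atTop (𝓝 (g φ))) :
    ∀ (φ : 𝓢(EuclideanSpace ℝ (Fin n), ℂ)) (t : ℝ) (ht : 0 < t),
      g (dil t⁻¹ (inv_ne_zero ht.ne') φ) = ((t ^ (α + n) : ℝ) : ℂ) * g φ := by
  intro φ t ht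
  have hρ : ∀ᶠ s : ℝ in atTop, ((ρ s : ℝ) : ℂ) ≠ 0 := by
    filter_upwards [eventually_gt_atTop 0] with s hs
    exact_mod_cast (hρpos s hs).ne'
  have hratio : Tendsto (fun s : ℝ => ((ρ (s * t) : ℝ) : ℂ) / ((ρ s : ℝ) : ℂ)) atTop
      (𝓝 ((t ^ α : ℝ) : ℂ)) := by
    simpa only [Complex.ofReal_div] using (hauto t ht).ofReal
  have hscaled := tendsto_comp_div_of_tendsto_ratio (tendsto_id.atTop_mul_const ht) hρ
    (hqa φ) hratio
  have hdil : Tendsto (fun s : ℝ => pairScaled n f s (dil t⁻¹ (inv_ne_zero ht.ne') φ) /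
      ((ρ s : ℝ) : ℂ)) atTop (𝓝 (((t ^ n : ℝ) : ℂ) * (g φ * ((t ^ α : ℝ) : ℂ)))) := by
    refine (hscaled.const_mul _).congr' ?_
    filter_upwards [eventually_ne_atTop 0] with s hs
    rw [pairScaled_dil_inv n f hs ht.ne', mul_div_assoc, id]
  rw [tendsto_nhds_unique (hqa _) hdil, Real.rpow_add ht, Real.rpow_natCast]
  push_cast
  ring

/-- If a tempered distribution `f` has quasi-asymptotics `g ≢ 0` at infinity with respect
to an automodel function `ρ` of degree `α`, then `g` is homogeneous of degree `α`:
`⟨g, φ(·/t)⟩ = t^{α+n} ⟨g, φ⟩` for all Schwartz `φ` and `t > 0`. -/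
theorem quasiasymptotic_limit_homogeneous (n : ℕ)
    (f g : 𝓢(EuclideanSpace ℝ (Fin n), ℂ) →L[ℂ] ℂ) (ρ : ℝ → ℝ) (α : ℝ)
    (hρpos : ∀ t : ℝ, 0 < t → 0 < ρ t)
    (hρcont : ContinuousOn ρ (Set.Ioi (0 : ℝ)))
    (hauto : ∀ a : ℝ, 0 < a → Tendsto (fun t => ρ (t * a) / ρ t) atTop (𝓝 (a ^ α)))
    (hg : g ≠ 0)
    (hqa : ∀ φ, Tendsto (fun t : ℝ => pairScaled n f t φ / ((ρ t : ℝ) : ℂ)) atTop (𝓝 (g φ))) :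
    ∀ (φ : 𝓢(EuclideanSpace ℝ (Fin n), ℂ)) (t : ℝ) (ht : 0 < t),
      g (dil t⁻¹ (inv_ne_zero ht.ne') φ) = ((t ^ (α + n) : ℝ) : ℂ) * g φ :=
  quasiasymptotic_limit_homogeneous_general n f g ρ α hρpos hauto hqa

end
end

section
/- Let n = 1. For a Schwartz function φ on ℝ with all moments vanishing (∫ x^m φ(x) dx = 0 for all m ∈ ℕ₀), and for r ∈ ℕ₀ and any x ∈ ℝ, t > 0: ∫_ℝ (ty)^{2r} (log|ty|) φ(x + y)·t dy = t^{2r+1} ∫_ℝ y^{2r} log|y| · φ(x+y) dy + t^{2r+1} log t · ∫_ℝ y^{2r} φ(x+y) dy, and the second integral vanishes, so ∫_ℝ (ty)^{2r} log|ty| φ(x+y) t dy = t^{2r+1} ∫_ℝ y^{2r} log|y| φ(x+y) dy. -/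
open MeasureTheory SchwartzMap Finset

/-- `|y|^(-1/2)` is integrable on `[-1,1]`. -/
lemma riesz_aux_int_rpow :
    IntegrableOn (fun y : ℝ => |y| ^ (-(1:ℝ)/2)) (Set.Icc (-1) 1) volume := by
  have h0 : IntervalIntegrable (fun y : ℝ => y ^ (-(1:ℝ)/2)) volume 0 1 :=
    intervalIntegral.intervalIntegrable_rpow' (by norm_num)
  have hA : IntervalIntegrable (fun y : ℝ => |y| ^ (-(1:ℝ)/2)) volume 0 1 := by
    rw [intervalIntegrable_iff] at h0 ⊢
    refine h0.congr_fun (fun y hy => ?_) measurableSet_uIoc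
    rw [Set.uIoc_of_le (by norm_num : (0:ℝ) ≤ 1)] at hy
    rw [abs_of_pos hy.1]
  have hB : IntervalIntegrable (fun y : ℝ => |y| ^ (-(1:ℝ)/2)) volume (-1) 0 := by
    rw [IntervalIntegrable.iff_comp_neg]
    simpa [abs_neg] using hA.symm
  have hAB := hB.trans hA
  rw [intervalIntegrable_iff, Set.uIoc_of_le (by norm_num : (-1:ℝ) ≤ 1)] at hAB
  rw [integrableOn_Icc_iff_integrableOn_Ioc]
  exact hAB

/-- Polynomial times translated Schwartz function is integrable. -/
lemma riesz_aux_int_pow_translate (φ : 𝓢(ℝ, ℂ)) (x : ℝ) (k : ℕ) :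
    Integrable (fun y : ℝ => |y| ^ k * ‖φ (x + y)‖) volume := by
  have key : Integrable (fun z : ℝ => |z - x| ^ k * ‖φ z‖) volume := by
    have hint : Integrable (fun z : ℝ =>
        ∑ i ∈ range (k + 1), (|x| ^ (k - i) * (k.choose i : ℝ)) * (‖z‖ ^ i * ‖φ z‖)) volume := by
      refine integrable_finset_sum _ fun i _ => ?_
      exact (φ.integrable_pow_mul volume i).const_mul _
    refine hint.mono' ?_ ?_
    · exact ((continuous_abs.comp (continuous_id.sub continuous_const)).pow k).mul
        φ.continuous.norm |>.aestronglyMeasurable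
    · filter_upwards with z
      have h1 : |z - x| ^ k ≤ (|z| + |x|) ^ k := by
        gcongr
        exact (abs_sub z x).trans le_rfl
      have h2 : (|z| + |x|) ^ k = ∑ i ∈ range (k + 1), |z| ^ i * |x| ^ (k - i) * (k.choose i : ℝ) :=
        add_pow _ _ _
      rw [Real.norm_eq_abs, abs_of_nonneg (by positivity)]
      calc |z - x| ^ k * ‖φ z‖ ≤ (|z| + |x|) ^ k * ‖φ z‖ := by
            gcongr
        _ = ∑ i ∈ range (k + 1), (|x| ^ (k - i) * (k.choose i : ℝ)) * (‖z‖ ^ i * ‖φ z‖) := by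
            rw [h2, sum_mul]
            refine sum_congr rfl fun i _ => ?_
            simp [Real.norm_eq_abs]; ring
  have := key.comp_add_left x
  refine this.congr (Filter.Eventually.of_forall fun y => ?_)
  simp

/-- `y^k φ(x+y)` is integrable. -/
lemma riesz_aux_int_pow (φ : 𝓢(ℝ, ℂ)) (x : ℝ) (k : ℕ) :
    Integrable (fun y : ℝ => ((y ^ k : ℝ) : ℂ) * φ (x + y)) volume := by
  refine (riesz_aux_int_pow_translate φ x k).mono' ?_ ?_
  · exact (Complex.continuous_ofReal.comp (continuous_pow k)).mul
      (φ.continuous.comp (continuous_const.add continuous_id)) |>.aestronglyMeasurable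
  · filter_upwards with y
    simp [abs_pow, norm_mul, Complex.norm_real]

/-- `|log u| ≤ 2 u^{-1/2}` for `0 < u ≤ 1`. -/
lemma riesz_aux_log_bound {u : ℝ} (h0 : 0 < u) (h1 : u ≤ 1) :
    |Real.log u| ≤ 2 * u ^ (-(1:ℝ)/2) := by
  have hlog : Real.log u ≤ 0 := Real.log_nonpos h0.le h1
  rw [abs_of_nonpos hlog]
  have h : Real.log (u ^ (-(1:ℝ)/2)) = (-(1:ℝ)/2) * Real.log u := Real.log_rpow h0 _
  have hle : Real.log (u ^ (-(1:ℝ)/2)) ≤ u ^ (-(1:ℝ)/2) :=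
    (Real.log_le_sub_one_of_pos (Real.rpow_pos_of_pos h0 _)).trans (by linarith [Real.rpow_pos_of_pos h0 (-(1:ℝ)/2)])
  nlinarith [Real.rpow_pos_of_pos h0 (-(1:ℝ)/2)]

/-- `|log u| ≤ u` for `1 ≤ u`. -/
lemma riesz_aux_log_bound' {u : ℝ} (h1 : 1 ≤ u) : |Real.log u| ≤ u := by
  rw [abs_of_nonneg (Real.log_nonneg h1)]
  exact (Real.log_le_sub_one_of_pos (by linarith)).trans (by linarith)

/-- `y^{2r} log|y| φ(x+y)` is integrable. -/
lemma riesz_aux_int_log (φ : 𝓢(ℝ, ℂ)) (x : ℝ) (r : ℕ) :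
    Integrable (fun y : ℝ => ((y ^ (2*r) * Real.log |y| : ℝ) : ℂ) * φ (x + y)) volume := by
  set F : ℝ → ℂ := fun y => ((y ^ (2*r) * Real.log |y| : ℝ) : ℂ) * φ (x + y) with hF
  obtain ⟨C, hC⟩ : ∃ C, ∀ z : ℝ, ‖φ z‖ ≤ C := by
    obtain ⟨C, -, hC⟩ := φ.decay 0 0
    exact ⟨C, fun z => by simpa using hC z⟩
  have hCpos : 0 ≤ C := le_trans (norm_nonneg _) (hC 0)
  have hmeas : AEStronglyMeasurable F volume := by
    refine Measurable.aestronglyMeasurable ?_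
    refine (Complex.measurable_ofReal.comp ?_).mul
      (φ.continuous.comp (continuous_const.add continuous_id)).measurable
    exact ((measurable_id.pow_const (2*r)).mul (Real.measurable_log.comp measurable_abs))
  have h1 : IntegrableOn F (Set.Icc (-1) 1) volume := by
    refine Integrable.mono' ((riesz_aux_int_rpow.const_mul (2*C))) hmeas.restrict ?_
    rw [ae_restrict_iff' measurableSet_Icc]
    filter_upwards [ae_iff.mpr (by simp : volume {y : ℝ | ¬ y ≠ 0} = 0)] with y hy hmem
    have hy0 : 0 < |y| := abs_pos.mpr hy
    have hy1 : |y| ≤ 1 := abs_le.mpr ⟨hmem.1, hmem.2⟩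
    have hbd := riesz_aux_log_bound hy0 hy1
    calc ‖F y‖ = |y| ^ (2*r) * (abs (Real.log |y|)) * ‖φ (x + y)‖ := by
          simp [hF, norm_mul, Complex.norm_real, abs_mul, abs_pow, mul_assoc]
      _ ≤ 1 * (2 * |y| ^ (-(1:ℝ)/2)) * C := by
          gcongr
          · exact pow_le_one₀ hy0.le hy1
          · exact hC _
      _ = 2 * C * |y| ^ (-(1:ℝ)/2) := by ring
  have h2 : IntegrableOn F (Set.Icc (-1) 1)ᶜ volume := by
    refine Integrable.mono' ((riesz_aux_int_pow_translate φ x (2*r+1)).restrict) hmeas.restrict ?_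
    rw [ae_restrict_iff' measurableSet_Icc.compl]
    filter_upwards with y hmem
    have hy1 : 1 ≤ |y| := by
      by_contra h
      push_neg at h
      exact hmem ⟨by linarith [neg_abs_le y, abs_nonneg y, h.le], by linarith [le_abs_self y]⟩
    have hbd := riesz_aux_log_bound' hy1
    calc ‖F y‖ = |y| ^ (2*r) * (abs (Real.log |y|)) * ‖φ (x + y)‖ := by
          simp [hF, norm_mul, Complex.norm_real, abs_mul, abs_pow, mul_assoc]
      _ ≤ |y| ^ (2*r) * |y| * ‖φ (x + y)‖ := by gcongr
      _ = |y| ^ (2*r+1) * ‖φ (x + y)‖ := by ring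
  have : IntegrableOn F (Set.Icc (-1) 1 ∪ (Set.Icc (-1) 1)ᶜ) volume := h1.union h2
  rwa [Set.union_compl_self, integrableOn_univ] at this

/-- For a Schwartz function `φ` on `ℝ` with all moments vanishing, `r ∈ ℕ₀`, `x ∈ ℝ`,
`t > 0`:
`∫ (ty)^{2r} log|ty| φ(x+y) t dy
  = t^{2r+1} ∫ y^{2r} log|y| φ(x+y) dy + t^{2r+1} (log t) ∫ y^{2r} φ(x+y) dy`,
the integral `∫ y^{2r} φ(x+y) dy` vanishes, and hence
`∫ (ty)^{2r} log|ty| φ(x+y) t dy = t^{2r+1} ∫ y^{2r} log|y| φ(x+y) dy`. -/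
theorem riesz_log_kernel_no_contribution (φ : 𝓢(ℝ, ℂ))
    (hmom : ∀ m : ℕ, ∫ x : ℝ, ((x ^ m : ℝ) : ℂ) * φ x = 0)
    (r : ℕ) (x t : ℝ) (ht : 0 < t) :
    (∫ y : ℝ, (((t * y) ^ (2 * r) * Real.log |t * y| * t : ℝ) : ℂ) * φ (x + y) =
      ((t ^ (2 * r + 1) : ℝ) : ℂ) *
          ∫ y : ℝ, ((y ^ (2 * r) * Real.log |y| : ℝ) : ℂ) * φ (x + y) +
        ((t ^ (2 * r + 1) * Real.log t : ℝ) : ℂ) *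
          ∫ y : ℝ, ((y ^ (2 * r) : ℝ) : ℂ) * φ (x + y)) ∧
    (∫ y : ℝ, ((y ^ (2 * r) : ℝ) : ℂ) * φ (x + y) = 0) ∧
    (∫ y : ℝ, (((t * y) ^ (2 * r) * Real.log |t * y| * t : ℝ) : ℂ) * φ (x + y) =
      ((t ^ (2 * r + 1) : ℝ) : ℂ) *
        ∫ y : ℝ, ((y ^ (2 * r) * Real.log |y| : ℝ) : ℂ) * φ (x + y)) := by
  have hF := riesz_aux_int_log φ x r
  have hG := riesz_aux_int_pow φ x (2*r)
  -- Part 2: vanishing moment integral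
  have h0 : ∫ y : ℝ, ((y ^ (2 * r) : ℝ) : ℂ) * φ (x + y) = 0 := by
    have hshift : ∫ y : ℝ, ((y ^ (2 * r) : ℝ) : ℂ) * φ (x + y)
        = ∫ z : ℝ, (((z - x) ^ (2 * r) : ℝ) : ℂ) * φ z := by
      rw [← integral_add_left_eq_self (fun z : ℝ => (((z - x) ^ (2 * r) : ℝ) : ℂ) * φ z) x]
      simp
    rw [hshift]
    have hexp : ∀ z : ℝ, (((z - x) ^ (2 * r) : ℝ) : ℂ) * φ z
        = ∑ i ∈ range (2*r + 1),
            ((-1 : ℂ) ^ (i + 2*r) * (x:ℂ) ^ (2*r - i) * ((2*r).choose i : ℂ)) *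
              (((z ^ i : ℝ) : ℂ) * φ z) := by
      intro z
      push_cast
      rw [sub_pow]
      rw [sum_mul]
      refine sum_congr rfl fun i _ => ?_
      ring
    rw [MeasureTheory.integral_congr_ae (Filter.Eventually.of_forall hexp)]
    rw [integral_finset_sum _ (fun i _ => (riesz_aux_int_pow φ 0 i).congr
      (Filter.Eventually.of_forall fun z => by simp) |>.const_mul _)]
    refine sum_eq_zero fun i _ => ?_
    rw [integral_const_mul]
    have := hmom i
    simp only [this, mul_zero]
  have h3 : (∫ y : ℝ, (((t * y) ^ (2 * r) * Real.log |t * y| * t : ℝ) : ℂ) * φ (x + y) =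
      ((t ^ (2 * r + 1) : ℝ) : ℂ) *
        ∫ y : ℝ, ((y ^ (2 * r) * Real.log |y| : ℝ) : ℂ) * φ (x + y)) := by
    have hae : (fun y : ℝ => (((t * y) ^ (2 * r) * Real.log |t * y| * t : ℝ) : ℂ) * φ (x + y))
        =ᵐ[volume] (fun y : ℝ =>
          ((t ^ (2 * r + 1) : ℝ) : ℂ) * (((y ^ (2 * r) * Real.log |y| : ℝ) : ℂ) * φ (x + y)) +
          ((t ^ (2 * r + 1) * Real.log t : ℝ) : ℂ) * (((y ^ (2 * r) : ℝ) : ℂ) * φ (x + y))) := by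
      filter_upwards [ae_iff.mpr (by simp : volume {y : ℝ | ¬ y ≠ 0} = 0)] with y hy
      have hlog : Real.log |t * y| = Real.log t + Real.log |y| := by
        rw [Real.log_abs, Real.log_mul ht.ne' hy, Real.log_abs]
      rw [hlog]
      push_cast
      ring
    rw [MeasureTheory.integral_congr_ae hae,
      integral_add (hF.const_mul _) (hG.const_mul _), integral_const_mul, integral_const_mul,
      h0, mul_zero, add_zero]
  refine ⟨?_, h0, h3⟩
  simp only [h0, mul_zero, add_zero]
  exact h3
end
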